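/- arXiv:2309.10489 — 3 statements merged into one kernel-verified Lean document; each statement's English description precedes it below -/
import Mathlib

section
/- Let c, m, n, s be positive natural numbers with n > (c-1)^(s-1). Let Σ be a finite alphabet of size s, and let M be an m×n matrix over Σ whose columns are mutually distinct. Then there exists a symbol σ ∈ Σ such that the 0/1-matrix M^(σ), obtained from M by replacing every σ-entry by 1 and every other entry by 0, has at least c distinct columns. -/
/-- If `M` is an `m × n` matrix over an alphabet `Σ` of size `s` with
mutually distinct columns and `n > (c-1)^(s-1)`, then for some symbol `σ` the 0/1-matrix
`M^(σ)` (replacing `σ`-entries by 1, all others by 0) has at least `c` distinct columns. -/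
theorem stmt_0 {Sigma : Type*} [Fintype Sigma] [DecidableEq Sigma]
    (c m n s : ℕ) (hc : 0 < c) (hm : 0 < m) (hn : 0 < n) (hs : 0 < s)
    (hcard : Fintype.card Sigma = s)
    (hgt : n > (c - 1) ^ (s - 1))
    (M : Fin m → Fin n → Sigma)
    (hdist : Function.Injective (fun j : Fin n => fun i : Fin m => M i j)) :
    ∃ σ : Sigma,
      c ≤ (Finset.univ.image
        (fun j : Fin n => fun i : Fin m => if M i j = σ then (1 : Fin 2) else 0)).card := by
  by_contra h
  push_neg at h
  have hSne : Nonempty Sigma := by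
    rw [← Fintype.card_pos_iff, hcard]; exact hs
  obtain ⟨σ0⟩ := hSne
  set ind : Sigma → Fin n → Fin m → Fin 2 :=
    fun σ j i => if M i j = σ then 1 else 0 with hind
  have hT : ∀ σ, (Finset.univ.image (ind σ)).card ≤ c - 1 := fun σ =>
    Nat.le_sub_one_of_lt (h σ)
  have hinj : Function.Injective
      (fun j : Fin n => fun σ : {σ : Sigma // σ ≠ σ0} => ind σ.1 j) := by
    intro j j' hjj
    apply hdist
    funext i
    simp only
    by_cases h0 : M i j = σ0
    · by_contra hne
      have h1 : M i j' ≠ σ0 := fun hh => hne (h0.trans hh.symm)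
      have := congrFun (congrFun hjj ⟨M i j', h1⟩) i
      simp [ind, hne] at this
    · have := congrFun (congrFun hjj ⟨M i j, h0⟩) i
      by_cases h2 : M i j' = M i j
      · exact h2.symm
      · simp [ind, h2] at this
  have hmem : ∀ j : Fin n, (fun σ : {σ : Sigma // σ ≠ σ0} => ind σ.1 j) ∈
      Fintype.piFinset (fun σ : {σ : Sigma // σ ≠ σ0} => Finset.univ.image (ind σ.1)) := by
    intro j
    rw [Fintype.mem_piFinset]
    intro σ
    exact Finset.mem_image_of_mem _ (Finset.mem_univ j)
  have hcard' : Fintype.card {σ : Sigma // σ ≠ σ0} = s - 1 := by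
    have : Fintype.card {σ : Sigma // σ = σ0} = 1 := Fintype.card_subtype_eq σ0
    have h2 := Fintype.card_subtype_compl (fun σ : Sigma => σ = σ0)
    simp only [this, hcard] at h2
    exact h2
  have hle : n ≤ (c - 1) ^ (s - 1) := by
    calc n = (Finset.univ : Finset (Fin n)).card := by simp
    _ ≤ (Fintype.piFinset (fun σ : {σ : Sigma // σ ≠ σ0} =>
          Finset.univ.image (ind σ.1))).card :=
        Finset.card_le_card_of_injOn _ (fun j _ => hmem j) hinj.injOn
    _ = ∏ σ : {σ : Sigma // σ ≠ σ0}, (Finset.univ.image (ind σ.1)).card :=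
        Fintype.card_piFinset _
    _ ≤ ∏ _σ : {σ : Sigma // σ ≠ σ0}, (c - 1) :=
        Finset.prod_le_prod (fun _ _ => Nat.zero_le _) (fun σ _ => hT σ.1)
    _ = (c - 1) ^ (s - 1) := by
        rw [Finset.prod_const, Finset.card_univ, hcard']
  omega
end

section
/- (Sauer–Shelah) Let X be a finite set and let H be a family of subsets of X such that no subset Y ⊆ X of size d+1 is shattered by H (i.e., the VC dimension of H is at most d). Then |H| ≤ Σ_{i=0}^{d} C(|X|, i). -/
/-- Sauer–Shelah: if no `(d+1)`-element subset `Y` of the finite set `X`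
is shattered by the family `H`, then `|H| ≤ ∑_{i=0}^d C(|X|, i)`. -/
theorem stmt_2 {α : Type*} [Fintype α] [DecidableEq α] (d : ℕ)
    (H : Finset (Finset α))
    (hVC : ∀ Y : Finset α, Y.card = d + 1 →
      ¬ (∀ Z ⊆ Y, ∃ A ∈ H, Y ∩ A = Z)) :
    H.card ≤ ∑ i ∈ Finset.range (d + 1), (Fintype.card α).choose i := by
  have hvc : H.vcDim ≤ d := by
    by_contra h
    push_neg at h
    obtain ⟨s, hs⟩ := Finset.exists_mem_eq_sup' (s := H.shatterer)
      (by
        by_contra hne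
        rw [Finset.not_nonempty_iff_eq_empty] at hne
        simp [Finset.vcDim, hne] at h) Finset.card
    have hsc : d + 1 ≤ s.card := by
      have := hs.2
      rw [Finset.sup'_eq_sup] at this
      rw [Finset.vcDim] at h
      omega
    obtain ⟨t, hts, htc⟩ := Finset.exists_subset_card_eq hsc
    exact hVC t htc <| (Finset.mem_shatterer.1 hs.1).mono_right hts
  calc H.card ≤ H.shatterer.card := Finset.card_le_card_shatterer H
    _ ≤ ∑ k ∈ Finset.Iic H.vcDim, (Fintype.card α).choose k :=
        Finset.card_shatterer_le_sum_vcDim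
    _ ≤ ∑ i ∈ Finset.range (d + 1), (Fintype.card α).choose i := by
        refine Finset.sum_le_sum_of_subset fun x hx => ?_
        simp only [Finset.mem_Iic] at hx
        simp only [Finset.mem_range]
        omega
end

section
/- With G as in the weighted-satisfiability gadget (vertices X_i, ¬X_i, Y_{i,1}, Y_{i,2}, Z_i and edges (X_i,¬X_i), (X_i,Y_{i,1}), (X_i,Y_{i,2}), (¬X_i,Z_i)): for an ℓ-tuple b = (b₁,...,b_ℓ) of vertices with all b_j of the form X_{t_j}, pairwise distinct, define the assignment β_b : {X₁,...,X_n} → {0,1} by β_b(X_t) = 1 iff X_t appears among b₁,...,b_ℓ. Then for a literal L (either X_t or ¬X_t), β_b satisfies L if and only if: (L = X_t and the vertex X_t equals some b_j) or (L = ¬X_t and the vertex ¬X_t is not adjacent in G to any b_j). Consequently, Φ has a satisfying assignment of weight exactly ℓ if and only if there exists such a tuple b making, for every clause i, at least one of its two literal-vertices satisfy the above condition. -/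
/-- Vertices of the gadget graph of the W[1]-hardness reduction. -/
inductive Vtx (n : ℕ) where
  | pos (i : Fin n)
  | neg (i : Fin n)
  | y (i : Fin n) (j : Fin 2)
  | z (i : Fin n)
  deriving DecidableEq

/-- The base relation of the gadget graph: edges `(Xᵢ, ¬Xᵢ)`, `(Xᵢ, Y_{i,j})`, `(¬Xᵢ, Zᵢ)`. -/
def gadgetRel {n : ℕ} : Vtx n → Vtx n → Prop
  | .pos i, .neg i' => i = i'
  | .pos i, .y i' _ => i = i'
  | .neg i, .z i' => i = i'
  | _, _ => False

/-- The gadget graph of the W[1]-hardness reduction. -/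
def gadgetGraph (n : ℕ) : SimpleGraph (Vtx n) :=
  SimpleGraph.fromRel gadgetRel

/-- A literal is a pair `(pol, t)`: the literal `X_t` if `pol = true`, `¬X_t` otherwise.
`β` satisfies the literal iff `β t = pol`. -/
def satLit {n : ℕ} (β : Fin n → Bool) (L : Bool × Fin n) : Prop := β L.2 = L.1

/-- The assignment `β_b` induced by a tuple `b` of variable indices. -/
def betaOf {ℓ n : ℕ} (b : Fin ℓ → Fin n) : Fin n → Bool :=
  fun t => decide (∃ j, b j = t)

/-- The weight of an assignment: the number of variables set to 1. -/
def weight {n : ℕ} (β : Fin n → Bool) : ℕ :=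
  (Finset.univ.filter (fun t => β t = true)).card

/-- The condition on the tuple `b` expressed in terms of the gadget graph: either the
literal is positive and its vertex equals some `b_j`-vertex, or it is negative and its
vertex `¬X_t` is not adjacent to any vertex `X_{b_j}`. -/
def condOf {ℓ n : ℕ} (b : Fin ℓ → Fin n) (L : Bool × Fin n) : Prop :=
  (L.1 = true ∧ ∃ j, (Vtx.pos L.2 : Vtx n) = Vtx.pos (b j)) ∨
  (L.1 = false ∧ ∀ j, ¬ (gadgetGraph n).Adj (Vtx.neg L.2) (Vtx.pos (b j)))

lemma gadgetGraph_adj_neg_pos {n : ℕ} (t s : Fin n) :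
    (gadgetGraph n).Adj (Vtx.neg t) (Vtx.pos s) ↔ s = t := by
  simp [gadgetGraph, SimpleGraph.fromRel_adj, gadgetRel]

lemma betaOf_eq_true_iff {ℓ n : ℕ} (b : Fin ℓ → Fin n) (t : Fin n) :
    betaOf b t = true ↔ t ∈ Set.range b := by
  simp [betaOf, Set.mem_range]

lemma satLit_betaOf_iff_condOf {ℓ n : ℕ} (b : Fin ℓ → Fin n) (L : Bool × Fin n) :
    satLit (betaOf b) L ↔ condOf b L := by
  obtain ⟨_ | _, t⟩ := L <;>
    simp [satLit, condOf, betaOf, gadgetGraph_adj_neg_pos, eq_comm]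

lemma weight_betaOf {ℓ n : ℕ} {b : Fin ℓ → Fin n} (hb : Function.Injective b) :
    weight (betaOf b) = ℓ := by
  have : Finset.univ.filter (fun t => betaOf b t = true) = Finset.univ.image b := by
    ext t
    simp [betaOf_eq_true_iff]
  rw [weight, this, Finset.card_image_of_injective _ hb, Finset.card_univ, Fintype.card_fin]

lemma exists_injective_betaOf_eq {ℓ n : ℕ} {β : Fin n → Bool} (hw : weight β = ℓ) :
    ∃ b : Fin ℓ → Fin n, Function.Injective b ∧ betaOf b = β := by
  have hcard : (Finset.univ.filter (fun t => β t = true)).card = ℓ := hw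
  refine ⟨_, (Finset.orderEmbOfFin _ hcard).injective, funext fun t => ?_⟩
  rw [Bool.eq_iff_iff, betaOf_eq_true_iff, Finset.range_orderEmbOfFin]
  simp

lemma exists_weight_eq_iff_exists_injective_betaOf {ℓ n : ℕ} (P : (Fin n → Bool) → Prop) :
    (∃ β : Fin n → Bool, weight β = ℓ ∧ P β) ↔
      ∃ b : Fin ℓ → Fin n, Function.Injective b ∧ P (betaOf b) := by
  constructor
  · rintro ⟨β, hw, hβ⟩
    obtain ⟨b, hb, rfl⟩ := exists_injective_betaOf_eq hw
    exact ⟨b, hb, hβ⟩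
  · rintro ⟨b, hb, hβ⟩
    exact ⟨betaOf b, weight_betaOf hb, hβ⟩

/-- correctness of the reduction from WSat(2-CNF). For a pairwise
distinct tuple `b` of variable indices, `β_b` satisfies a literal `L` iff the
graph-theoretic condition `condOf b L` holds; and the 2-CNF formula with clauses `C` has
a satisfying assignment of weight exactly `ℓ` iff some injective tuple `b` makes, for
every clause, at least one of its two literals satisfy that condition. -/
theorem stmt_12 (n m ℓ : ℕ) (C : Fin m → (Bool × Fin n) × (Bool × Fin n)) :
    (∀ b : Fin ℓ → Fin n, Function.Injective b →
      ∀ L : Bool × Fin n, satLit (betaOf b) L ↔ condOf b L) ∧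
    ((∃ β : Fin n → Bool, weight β = ℓ ∧
        ∀ i, satLit β (C i).1 ∨ satLit β (C i).2) ↔
      (∃ b : Fin ℓ → Fin n, Function.Injective b ∧
        ∀ i, condOf b (C i).1 ∨ condOf b (C i).2)) := by
  refine ⟨fun b _ L => satLit_betaOf_iff_condOf b L, ?_⟩
  simp only [exists_weight_eq_iff_exists_injective_betaOf, satLit_betaOf_iff_condOf]
end
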